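/- Legendre's theorem (qualitative form for the sphere): Let T_R be a spherical triangle on a sphere of radius R with fixed side lengths a, b, c (geodesic lengths), and let T be the planar (Euclidean) triangle with the same side lengths. As R → ∞, each angle of T_R minus the corresponding angle of T equals (1/3)·(ε(R)) + o(ε(R)), where ε(R) = Area(T_R)/R² is the spherical excess; in particular each spherical angle exceeds the planar angle by one third of the excess to first order. -/

import Mathlib

open Real Filter Asymptotics
open Topology

/-- The angle opposite side `a` in the spherical triangle with geodesic side lengths
`a, b, c` on a sphere of radius `R`, given by the spherical law of cosines. -/
noncomputable def sphAngle (a b c R : ℝ) : ℝ :=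
  Real.arccos ((Real.cos (a / R) - Real.cos (b / R) * Real.cos (c / R)) /
    (Real.sin (b / R) * Real.sin (c / R)))

/-- The angle opposite side `a` in the planar triangle with side lengths `a, b, c`,
given by the planar law of cosines. -/
noncomputable def planarAngle (a b c : ℝ) : ℝ :=
  Real.arccos ((b ^ 2 + c ^ 2 - a ^ 2) / (2 * b * c))

/-- The spherical excess of the spherical triangle with sides `a, b, c` on a sphere of
radius `R` (equal to `Area/R²`). -/
noncomputable def sphExcess (a b c R : ℝ) : ℝ :=
  sphAngle a b c R + sphAngle b c a R + sphAngle c a b R - π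

noncomputable def legPoly (a b c : ℝ) : ℝ :=
  2*a^2*b^2 + 2*b^2*c^2 + 2*c^2*a^2 - a^4 - b^4 - c^4

lemma legPoly_cyc (a b c : ℝ) : legPoly b c a = legPoly a b c := by unfold legPoly; ring

lemma legPoly_pos {a b c : ℝ} (ha : 0 < a) (hb : 0 < b) (hc : 0 < c)
    (hab : a < b + c) (hbc : b < a + c) (hca : c < a + b) : 0 < legPoly a b c := by
  have h : legPoly a b c = (a+b+c)*((b+c)-a)*((a+c)-b)*((a+b)-c) := by unfold legPoly; ring
  rw [h]
  have h1 : (0:ℝ) < a+b+c := by linarith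
  have h2 : (0:ℝ) < (b+c)-a := by linarith
  have h3 : (0:ℝ) < (a+c)-b := by linarith
  have h4 : (0:ℝ) < (a+b)-c := by linarith
  positivity

lemma cos_quartic_bound {x : ℝ} (hx : |x| ≤ 1) :
    |Real.cos x - (1 - x^2/2 + x^4/24)| ≤ |x|^5 := by
  have hxn : 0 ≤ |x| := abs_nonneg x
  have hu : |x/2| ≤ 1 := by rw [abs_div]; simp only [abs_two]; linarith
  have hs := Real.sin_bound hu
  have hc : Real.cos x = 1 - 2 * Real.sin (x/2)^2 := by
    have h2 := Real.cos_two_mul' (x/2)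
    rw [show 2*(x/2) = x by ring] at h2
    rw [h2, Real.cos_sq']; ring
  set s := Real.sin (x/2) with hsdef
  set p := x/2 - (x/2)^3/6 with hpdef
  have key : Real.cos x - (1 - x^2/2 + x^4/24) = -2*((s-p)*(s+p)) - x^6/1152 := by
    rw [hc, hpdef]; ring
  have hsb : |s| ≤ |x|/2 := by
    have := Real.abs_sin_le_abs (x := x/2)
    rwa [abs_div, abs_two] at this
  have hx2 : |x|^2 ≤ 1 := pow_le_one₀ hxn hx
  have hxc : |x|^3 ≤ |x| := by nlinarith
  have hpb : |p| ≤ |x| := by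
    have h1 : |p| ≤ |x/2| + |x/2|^3/6 := by
      refine (abs_sub _ _).trans ?_
      gcongr
      rw [abs_div, abs_pow, abs_div]
      simp [abs_two]
    rw [abs_div, abs_two] at h1
    nlinarith
  have hsp : |s - p| ≤ |x|^4 * (5/1536) := by
    have := hs
    rw [abs_div, abs_two] at this
    calc |s - p| ≤ (|x|/2)^4 * (5/96) := this.trans (by
        have hy0 : 0 ≤ |x|/2 := by positivity
        have hy1 : |x|/2 ≤ 1 := by linarith
        nlinarith [mul_le_mul_of_nonneg_left hy1 (pow_nonneg hy0 4), pow_nonneg hy0 4])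
      _ = |x|^4 * (5/1536) := by ring
  rw [key]
  have h6 : |x|^6 ≤ |x|^5 := by nlinarith [pow_nonneg hxn 5]
  have h5 : |x|^4 * |x| = |x|^5 := by ring
  calc |(-2)*((s-p)*(s+p)) - x^6/1152|
      ≤ |(-2)*((s-p)*(s+p))| + |x^6/1152| := abs_sub _ _
    _ = 2 * (|s-p| * |s+p|) + |x|^6/1152 := by
        have e1 : |(-2)*((s-p)*(s+p))| = 2 * (|s-p| * |s+p|) := by
          rw [abs_mul, abs_mul]; norm_num
        have e2 : |x^6/1152| = |x|^6/1152 := by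
          rw [abs_div, abs_pow]; norm_num
        rw [e1, e2]
    _ ≤ 2 * ((|x|^4 * (5/1536)) * (|x|/2 + |x|)) + |x|^5/1152 := by
        gcongr
        · exact (abs_add_le _ _).trans (by gcongr)
    _ ≤ |x|^5 := by nlinarith [pow_nonneg hxn 4, pow_nonneg hxn 5]

lemma cos_isLittleO (k : ℝ) :
    (fun x : ℝ => Real.cos (k*x) - (1 - (k*x)^2/2 + (k*x)^4/24)) =o[𝓝 (0:ℝ)] fun x => x^4 := by
  have hO : (fun x : ℝ => Real.cos (k*x) - (1 - (k*x)^2/2 + (k*x)^4/24)) =O[𝓝 (0:ℝ)]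
      fun x => x^5 := by
    rw [isBigO_iff]
    refine ⟨|k|^5, ?_⟩
    have hev := eventually_abs_sub_lt (0:ℝ) (by positivity : (0:ℝ) < (|k|+1)⁻¹)
    filter_upwards [hev] with x hxx
    rw [sub_zero] at hxx
    have hk1 : |k*x| ≤ 1 := by
      rw [abs_mul]
      have h1 : |k| * |x| ≤ |k| * (|k|+1)⁻¹ :=
        mul_le_mul_of_nonneg_left hxx.le (abs_nonneg k)
      have h2 : |k| * (|k|+1)⁻¹ ≤ 1 := by
        rw [mul_inv_le_iff₀ (by positivity)]
        linarith [abs_nonneg k]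
      linarith
    have := cos_quartic_bound hk1
    calc ‖Real.cos (k*x) - (1 - (k*x)^2/2 + (k*x)^4/24)‖ = |Real.cos (k*x) - (1 - (k*x)^2/2 + (k*x)^4/24)| := rfl
      _ ≤ |k*x|^5 := this
      _ = |k|^5 * ‖x^5‖ := by rw [abs_mul, mul_pow]; simp [abs_pow]
  exact hO.trans_isLittleO (isLittleO_pow_pow (by norm_num : 4 < 5))

lemma sin_isLittleO (k : ℝ) :
    (fun x : ℝ => Real.sin (k*x) - (k*x - (k*x)^3/6)) =o[𝓝 (0:ℝ)] fun x => x^3 := by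
  have hO : (fun x : ℝ => Real.sin (k*x) - (k*x - (k*x)^3/6)) =O[𝓝 (0:ℝ)]
      fun x => x^4 := by
    rw [isBigO_iff]
    refine ⟨|k|^4 * (5/96), ?_⟩
    have hev := eventually_abs_sub_lt (0:ℝ) (by positivity : (0:ℝ) < (|k|+1)⁻¹)
    filter_upwards [hev] with x hxx
    rw [sub_zero] at hxx
    have hk1 : |k*x| ≤ 1 := by
      rw [abs_mul]
      have h1 : |k| * |x| ≤ |k| * (|k|+1)⁻¹ :=
        mul_le_mul_of_nonneg_left hxx.le (abs_nonneg k)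
      have h2 : |k| * (|k|+1)⁻¹ ≤ 1 := by
        rw [mul_inv_le_iff₀ (by positivity)]
        linarith [abs_nonneg k]
      linarith
    have := Real.sin_bound hk1
    calc ‖Real.sin (k*x) - (k*x - (k*x)^3/6)‖ = |Real.sin (k*x) - (k*x - (k*x)^3/6)| := rfl
      _ ≤ |k*x|^4 * (5/96) := this.trans (by
          have hy0 : 0 ≤ |k*x| := abs_nonneg _
          nlinarith [mul_le_mul_of_nonneg_left hk1 (pow_nonneg hy0 4), pow_nonneg hy0 4])
      _ = |k|^4 * (5/96) * ‖x^4‖ := by rw [abs_mul, mul_pow]; simp [abs_pow]; ring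
  exact hO.trans_isLittleO (isLittleO_pow_pow (by norm_num : 3 < 4))

noncomputable def q0v (a b c : ℝ) : ℝ := (b^2+c^2-a^2)/(2*b*c)
noncomputable def q2v (a b c : ℝ) : ℝ :=
  ((a^4-b^4-c^4)/24 - b^2*c^2/4 - q0v a b c * (-(b*c*(b^2+c^2))/6))/(b*c)

lemma num_isLittleO (a b c : ℝ) (hb : b ≠ 0) (hc : c ≠ 0) :
    (fun x : ℝ => (Real.cos (a*x) - Real.cos (b*x) * Real.cos (c*x))
      - (q0v a b c + q2v a b c * x^2) * (Real.sin (b*x) * Real.sin (c*x)))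
      =o[𝓝 (0:ℝ)] fun x => x^4 := by
  set q0 := q0v a b c with hq0
  set q2 := q2v a b c with hq2
  set K1 : ℝ := b^2*c^2*(b^2+c^2)/48 - q0 * (b^3*c^3/36) - q2 * (-(b*c*(b^2+c^2))/6) with hK1
  set K2 : ℝ := -(b^4*c^4)/576 - q2 * (b^3*c^3/36) with hK2
  have decomp : ∀ x : ℝ,
      (Real.cos (a*x) - Real.cos (b*x) * Real.cos (c*x))
        - (q0 + q2 * x^2) * (Real.sin (b*x) * Real.sin (c*x))
      = (Real.cos (a*x) - (1 - (a*x)^2/2 + (a*x)^4/24))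
        - (Real.cos (b*x) - (1 - (b*x)^2/2 + (b*x)^4/24)) * Real.cos (c*x)
        - (1 - (b*x)^2/2 + (b*x)^4/24) * (Real.cos (c*x) - (1 - (c*x)^2/2 + (c*x)^4/24))
        - (q0 + q2 * x^2) * ((Real.sin (b*x) - (b*x - (b*x)^3/6)) * Real.sin (c*x))
        - (q0 + q2 * x^2) * ((b*x - (b*x)^3/6) * (Real.sin (c*x) - (c*x - (c*x)^3/6)))
        + x^6 * (K1 + K2 * x^2) := by
    intro x
    have hpoly : (1 - (a*x)^2/2 + (a*x)^4/24)
        - (1 - (b*x)^2/2 + (b*x)^4/24) * (1 - (c*x)^2/2 + (c*x)^4/24)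
        - (q0 + q2*x^2) * ((b*x - (b*x)^3/6) * (c*x - (c*x)^3/6))
        = x^6 * (K1 + K2 * x^2) := by
      rw [hK1, hK2, hq2, hq0]
      unfold q2v q0v
      field_simp
      ring
    linear_combination hpoly
  have honeB : (fun x : ℝ => (1 - (b*x)^2/2 + (b*x)^4/24)) =O[𝓝 (0:ℝ)] (fun _ => (1:ℝ)) :=
    Filter.Tendsto.isBigO_one ℝ ((by fun_prop : Continuous fun x : ℝ => (1 - (b*x)^2/2 + (b*x)^4/24)).tendsto 0)
  have honeQ : (fun x : ℝ => q0 + q2 * x^2) =O[𝓝 (0:ℝ)] (fun _ => (1:ℝ)) :=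
    Filter.Tendsto.isBigO_one ℝ ((by fun_prop : Continuous fun x : ℝ => q0 + q2 * x^2).tendsto 0)
  have hcosC : (fun x : ℝ => Real.cos (c*x)) =O[𝓝 (0:ℝ)] (fun _ => (1:ℝ)) :=
    Filter.Tendsto.isBigO_one ℝ ((by fun_prop : Continuous fun x : ℝ => Real.cos (c*x)).tendsto 0)
  have hsinC : (fun x : ℝ => Real.sin (c*x)) =O[𝓝 (0:ℝ)] (fun x => x) := by
    rw [isBigO_iff]
    exact ⟨|c|, Filter.Eventually.of_forall fun x => by
      simpa [abs_mul] using Real.abs_sin_le_abs (x := c*x)⟩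
  have hPb : (fun x : ℝ => (b*x - (b*x)^3/6)) =O[𝓝 (0:ℝ)] (fun x => x) := by
    rw [isBigO_iff]
    refine ⟨|b| + |b|^3/6, ?_⟩
    filter_upwards [eventually_abs_sub_lt (0:ℝ) one_pos] with x hx
    rw [sub_zero] at hx
    have h3 : |x|^3 ≤ |x| := by nlinarith [abs_nonneg x, pow_le_one₀ (abs_nonneg x) hx.le (n := 2)]
    have hmb := mul_le_mul_of_nonneg_left h3 (pow_nonneg (abs_nonneg b) 3)
    calc ‖b*x - (b*x)^3/6‖ ≤ |b*x| + |(b*x)^3/6| := abs_sub _ _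
      _ = |b| * |x| + |b|^3 * |x|^3/6 := by
          rw [abs_mul, abs_div, abs_pow, abs_mul, mul_pow]; norm_num
      _ ≤ |b| * |x| + |b|^3 * |x|/6 := by linarith
      _ = (|b| + |b|^3/6) * ‖x‖ := by rw [Real.norm_eq_abs]; ring
  have h1 := cos_isLittleO a
  have h2 : (fun x : ℝ => (Real.cos (b*x) - (1 - (b*x)^2/2 + (b*x)^4/24)) * Real.cos (c*x))
      =o[𝓝 (0:ℝ)] fun x => x^4 := by
    simpa using (cos_isLittleO b).mul_isBigO hcosC
  have h3 : (fun x : ℝ => (1 - (b*x)^2/2 + (b*x)^4/24) * (Real.cos (c*x) - (1 - (c*x)^2/2 + (c*x)^4/24)))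
      =o[𝓝 (0:ℝ)] fun x => x^4 := by
    simpa using honeB.mul_isLittleO (cos_isLittleO c)
  have h4 : (fun x : ℝ => (q0 + q2 * x^2) * ((Real.sin (b*x) - (b*x - (b*x)^3/6)) * Real.sin (c*x)))
      =o[𝓝 (0:ℝ)] fun x => x^4 := by
    have := honeQ.mul_isLittleO ((sin_isLittleO b).mul_isBigO hsinC)
    refine this.congr' EventuallyEq.rfl (Filter.Eventually.of_forall fun x => ?_)
    ring
  have h5 : (fun x : ℝ => (q0 + q2 * x^2) * ((b*x - (b*x)^3/6) * (Real.sin (c*x) - (c*x - (c*x)^3/6))))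
      =o[𝓝 (0:ℝ)] fun x => x^4 := by
    have := honeQ.mul_isLittleO (hPb.mul_isLittleO (sin_isLittleO c))
    refine this.congr' EventuallyEq.rfl (Filter.Eventually.of_forall fun x => ?_)
    ring
  have h6 : (fun x : ℝ => x^6 * (K1 + K2 * x^2)) =o[𝓝 (0:ℝ)] fun x => x^4 := by
    have hb6 : (fun x : ℝ => x^6 * (K1 + K2 * x^2)) =O[𝓝 (0:ℝ)] fun x => x^6 := by
      simpa using (isBigO_refl (fun x : ℝ => x^6) (𝓝 0)).mul (Filter.Tendsto.isBigO_one ℝ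
        ((by fun_prop : Continuous fun x : ℝ => K1 + K2 * x^2).tendsto 0))
    exact hb6.trans_isLittleO (isLittleO_pow_pow (by norm_num : 4 < 6))
  have total := ((((h1.sub h2).sub h3).sub h4).sub h5).add h6
  refine total.congr' (Filter.Eventually.of_forall fun x => (decomp x).symm) EventuallyEq.rfl

lemma quot_isLittleO (a b c : ℝ) (hb : 0 < b) (hc : 0 < c) :
    (fun x : ℝ => (Real.cos (a*x) - Real.cos (b*x) * Real.cos (c*x)) /
        (Real.sin (b*x) * Real.sin (c*x)) - q0v a b c - q2v a b c * x^2)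
      =o[𝓝[>] (0:ℝ)] fun x => x^2 := by
  rw [isLittleO_iff]
  intro C hC
  have hnum := num_isLittleO a b c hb.ne' hc.ne'
  rw [isLittleO_iff] at hnum
  have hev1 := (hnum (show (0:ℝ) < C*(b*c)/2 by positivity)).filter_mono
    (nhdsWithin_le_nhds (s := Set.Ioi (0:ℝ)))
  have hδ : (0:ℝ) < min (1/b) (1/c) := by positivity
  have hev2 : ∀ᶠ x in 𝓝[>] (0:ℝ), x ∈ Set.Ioo 0 (min (1/b) (1/c)) :=
    Ioo_mem_nhdsGT_of_mem ⟨le_refl 0, hδ⟩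
  filter_upwards [hev1, hev2] with x hx1 hx2
  obtain ⟨hx0, hxd⟩ := hx2
  have hbx : 0 < b * x := by positivity
  have hcx : 0 < c * x := by positivity
  have hbx1 : b * x ≤ 1 := by
    have : x < 1/b := lt_of_lt_of_le hxd (min_le_left _ _)
    calc b * x ≤ b * (1/b) := by nlinarith
      _ = 1 := by field_simp
  have hcx1 : c * x ≤ 1 := by
    have : x < 1/c := lt_of_lt_of_le hxd (min_le_right _ _)
    calc c * x ≤ c * (1/c) := by nlinarith
      _ = 1 := by field_simp
  have hsb : (3/4) * (b*x) ≤ Real.sin (b*x) := by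
    have h1 := Real.sin_gt_sub_cube hbx
    nlinarith [pow_le_one₀ hbx.le hbx1 (n := 2)]
  have hsc : (3/4) * (c*x) ≤ Real.sin (c*x) := by
    have h1 := Real.sin_gt_sub_cube hcx
    nlinarith [pow_le_one₀ hcx.le hcx1 (n := 2)]
  have hD : (1/2) * (b*c) * x^2 ≤ Real.sin (b*x) * Real.sin (c*x) := by
    have := mul_le_mul hsb hsc (by positivity) (by nlinarith)
    nlinarith
  have hDpos : 0 < Real.sin (b*x) * Real.sin (c*x) := by nlinarith
  have heq : (Real.cos (a*x) - Real.cos (b*x) * Real.cos (c*x)) /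
        (Real.sin (b*x) * Real.sin (c*x)) - q0v a b c - q2v a b c * x^2
      = ((Real.cos (a*x) - Real.cos (b*x) * Real.cos (c*x))
          - (q0v a b c + q2v a b c * x^2) * (Real.sin (b*x) * Real.sin (c*x))) /
        (Real.sin (b*x) * Real.sin (c*x)) := by
    rw [eq_div_iff hDpos.ne', sub_mul, sub_mul, div_mul_cancel₀ _ hDpos.ne']
    ring
  rw [heq]
  have hnorm : ‖((Real.cos (a*x) - Real.cos (b*x) * Real.cos (c*x))
          - (q0v a b c + q2v a b c * x^2) * (Real.sin (b*x) * Real.sin (c*x))) /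
        (Real.sin (b*x) * Real.sin (c*x))‖
      = ‖(Real.cos (a*x) - Real.cos (b*x) * Real.cos (c*x))
          - (q0v a b c + q2v a b c * x^2) * (Real.sin (b*x) * Real.sin (c*x))‖ /
        (Real.sin (b*x) * Real.sin (c*x)) := by
    rw [norm_div, Real.norm_eq_abs (Real.sin (b*x) * Real.sin (c*x)), abs_of_pos hDpos]
  rw [hnorm, div_le_iff₀ hDpos]
  have hx41 : ‖x^4‖ = x^4 := by
    rw [Real.norm_eq_abs, abs_of_pos (by positivity)]
  have hx21 : ‖x^2‖ = x^2 := by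
    rw [Real.norm_eq_abs, abs_of_pos (by positivity)]
  rw [hx41] at hx1
  rw [hx21]
  have hn0 : (0:ℝ) ≤ ‖(Real.cos (a*x) - Real.cos (b*x) * Real.cos (c*x))
          - (q0v a b c + q2v a b c * x^2) * (Real.sin (b*x) * Real.sin (c*x))‖ := norm_nonneg _
  nlinarith [mul_le_mul_of_nonneg_left hD (show (0:ℝ) ≤ C * x^2 by positivity)]

lemma keyX (a b c : ℝ) (ha : 0 < a) (hb : 0 < b) (hc : 0 < c)
    (hab : a < b + c) (hbc : b < a + c) (hca : c < a + b) :
    (fun x : ℝ => Real.arccos ((Real.cos (a*x) - Real.cos (b*x) * Real.cos (c*x)) /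
        (Real.sin (b*x) * Real.sin (c*x))) - Real.arccos (q0v a b c)
      - Real.sqrt (legPoly a b c) / 12 * x^2)
      =o[𝓝[>] (0:ℝ)] fun x => x^2 := by
  have hP := legPoly_pos ha hb hc hab hbc hca
  have hPs : 0 < Real.sqrt (legPoly a b c) := Real.sqrt_pos.mpr hP
  have hq0lt : q0v a b c < 1 := by
    unfold q0v
    rw [div_lt_one (by positivity)]
    nlinarith [mul_pos (show (0:ℝ) < a - (b - c) by linarith) (show (0:ℝ) < a + (b - c) by linarith)]
  have hq0gt : -1 < q0v a b c := by
    unfold q0v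
    rw [lt_div_iff₀ (by positivity)]
    nlinarith [mul_pos (show (0:ℝ) < b + c - a by linarith) (show (0:ℝ) < b + c + a by linarith)]
  have h1q : (0:ℝ) < 1 - (q0v a b c)^2 := by nlinarith
  have hsq : Real.sqrt (1 - (q0v a b c)^2) = Real.sqrt (legPoly a b c) / (2*(b*c)) := by
    have h1 : 1 - (q0v a b c)^2 = legPoly a b c / (2*(b*c))^2 := by
      unfold q0v legPoly
      field_simp
      ring
    rw [h1, Real.sqrt_div hP.le, Real.sqrt_sq (by positivity)]
  have hd := Real.hasDerivAt_arccos (ne_of_gt hq0gt) (ne_of_lt hq0lt)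
  have hder := hasDerivAt_iff_isLittleO.mp hd
  set d : ℝ := -(1/Real.sqrt (1 - (q0v a b c)^2)) with hddef
  set q : ℝ → ℝ := fun x => (Real.cos (a*x) - Real.cos (b*x) * Real.cos (c*x)) /
        (Real.sin (b*x) * Real.sin (c*x)) with hqdef
  set l := 𝓝[>] (0:ℝ) with hldef
  have hquot : (fun x : ℝ => q x - q0v a b c - q2v a b c * x^2) =o[l] fun x => x^2 :=
    quot_isLittleO a b c hb hc
  have hqO : (fun x : ℝ => q x - q0v a b c) =O[l] fun x => x^2 := by
    have h2 : (fun x : ℝ => q2v a b c * x^2) =O[l] fun x => x^2 :=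
      (isBigO_refl _ _).const_mul_left (q2v a b c)
    have := hquot.isBigO.add h2
    refine this.congr' (Filter.Eventually.of_forall fun x => by ring)
      (Filter.Eventually.of_forall fun x => rfl)
  have htend : Tendsto q l (𝓝 (q0v a b c)) := by
    have hx2 : Tendsto (fun x : ℝ => x^2) l (𝓝 0) := by
      have : Tendsto (fun x : ℝ => x^2) (𝓝 (0:ℝ)) (𝓝 (0:ℝ)) :=
        (continuous_pow 2).tendsto' 0 0 (by norm_num)
      exact this.mono_left nhdsWithin_le_nhds
    have h0 : Tendsto (fun x : ℝ => q x - q0v a b c) l (𝓝 0) := hqO.trans_tendsto hx2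
    have := h0.add (tendsto_const_nhds (x := q0v a b c) (f := l))
    simpa using this
  have hcomp := (hder.comp_tendsto htend).trans_isBigO hqO
  have hlin : (fun x : ℝ => (q x - q0v a b c) * d - (q2v a b c * d) * x^2) =o[l] fun x => x^2 := by
    have := hquot.const_mul_left d
    refine this.congr' (Filter.Eventually.of_forall fun x => by ring)
      (Filter.Eventually.of_forall fun x => rfl)
  have hsum := hcomp.add hlin
  have hcoef : q2v a b c * d = Real.sqrt (legPoly a b c) / 12 := by
    have hq2P : q2v a b c * (b*c) = -(legPoly a b c)/24 := by
      unfold q2v q0v legPoly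
      field_simp
      ring
    have hd2 : d = -(2*(b*c)/Real.sqrt (legPoly a b c)) := by
      rw [hddef, hsq, one_div_div]
    rw [hd2]
    have h3 : q2v a b c * -(2*(b*c)/Real.sqrt (legPoly a b c))
        = (q2v a b c * (b*c)) * (-2) / Real.sqrt (legPoly a b c) := by ring
    rw [h3, hq2P]
    rw [show -(legPoly a b c)/24 * (-2) = legPoly a b c / 12 by ring]
    rw [div_div, mul_comm (12:ℝ) _, ← div_div, Real.div_sqrt]
  refine hsum.congr' (Filter.Eventually.of_forall fun x => ?_)
    (Filter.Eventually.of_forall fun x => rfl)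
  simp only [Function.comp, smul_eq_mul]
  rw [← hcoef]
  ring

lemma keyR (a b c : ℝ) (ha : 0 < a) (hb : 0 < b) (hc : 0 < c)
    (hab : a < b + c) (hbc : b < a + c) (hca : c < a + b) :
    (fun R : ℝ => sphAngle a b c R - planarAngle a b c
        - Real.sqrt (legPoly a b c) / 12 * (R⁻¹)^2)
      =o[atTop] fun R : ℝ => (R⁻¹)^2 := by
  have h := (keyX a b c ha hb hc hab hbc hca).comp_tendsto tendsto_inv_atTop_nhdsGT_zero
  refine h.congr' (Filter.Eventually.of_forall fun R => ?_)
    (Filter.Eventually.of_forall fun R => rfl)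
  simp only [Function.comp, sphAngle, planarAngle, q0v, div_eq_mul_inv]

lemma planar_cos (a b c : ℝ) (ha : 0 < a) (hb : 0 < b) (hc : 0 < c)
    (hab : a < b + c) (hbc : b < a + c) (hca : c < a + b) :
    Real.cos (planarAngle a b c) = (b^2+c^2-a^2)/(2*(b*c)) ∧
    Real.sin (planarAngle a b c) = Real.sqrt (legPoly a b c) / (2*(b*c)) ∧
    0 < planarAngle a b c ∧ planarAngle a b c < π := by
  have hP := legPoly_pos ha hb hc hab hbc hca
  have hq0lt : (b^2+c^2-a^2)/(2*b*c) < 1 := by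
    rw [div_lt_one (by positivity)]
    nlinarith [mul_pos (show (0:ℝ) < a - (b - c) by linarith) (show (0:ℝ) < a + (b - c) by linarith)]
  have hq0gt : -1 < (b^2+c^2-a^2)/(2*b*c) := by
    rw [lt_div_iff₀ (by positivity)]
    nlinarith [mul_pos (show (0:ℝ) < b + c - a by linarith) (show (0:ℝ) < b + c + a by linarith)]
  refine ⟨?_, ?_, ?_, ?_⟩
  · rw [planarAngle, Real.cos_arccos hq0gt.le hq0lt.le]
    ring
  · rw [planarAngle, Real.sin_arccos]
    have h1 : 1 - ((b^2+c^2-a^2)/(2*b*c))^2 = legPoly a b c / (2*(b*c))^2 := by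
      unfold legPoly
      field_simp
      ring
    rw [h1, Real.sqrt_div hP.le, Real.sqrt_sq (by positivity)]
  · exact Real.arccos_pos.mpr hq0lt
  · refine lt_of_le_of_ne (Real.arccos_le_pi _) ?_
    rw [planarAngle]
    intro hcon
    have := Real.arccos_eq_pi.mp hcon
    linarith

lemma planar_sum (a b c : ℝ) (ha : 0 < a) (hb : 0 < b) (hc : 0 < c)
    (hab : a < b + c) (hbc : b < a + c) (hca : c < a + b) :
    planarAngle a b c + planarAngle b c a + planarAngle c a b = π := by
  have hP := legPoly_pos ha hb hc hab hbc hca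
  have hPs : 0 < Real.sqrt (legPoly a b c) := Real.sqrt_pos.mpr hP
  obtain ⟨hcA, hsA, hA0, hAπ⟩ := planar_cos a b c ha hb hc hab hbc hca
  obtain ⟨hcB, hsB, hB0, hBπ⟩ := planar_cos b c a hb hc ha (by linarith) (by linarith) (by linarith)
  obtain ⟨hcC, hsC, hC0, hCπ⟩ := planar_cos c a b hc ha hb (by linarith) (by linarith) (by linarith)
  rw [legPoly_cyc a b c] at hsB
  rw [legPoly_cyc b c a, legPoly_cyc a b c] at hsC
  set A := planarAngle a b c
  set B := planarAngle b c a
  set C := planarAngle c a b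
  have hPP : Real.sqrt (legPoly a b c) * Real.sqrt (legPoly a b c) = legPoly a b c :=
    Real.mul_self_sqrt hP.le
  have hcosAB : Real.cos (A + B) = -((a^2+b^2-c^2)/(2*(a*b))) := by
    rw [Real.cos_add, hcA, hcB, hsA, hsB,
      div_mul_div_comm (Real.sqrt (legPoly a b c)) (2*(b*c)) (Real.sqrt (legPoly a b c)) (2*(c*a)),
      hPP]
    unfold legPoly
    field_simp
    ring
  have hsinAB : Real.sin (A + B) = Real.sqrt (legPoly a b c) / (2*(a*b)) := by
    rw [Real.sin_add, hsA, hcB, hcA, hsB]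
    field_simp
    ring
  have hABpos : 0 < A + B := by linarith
  have hABlt : A + B < π := by
    by_contra hcon
    push_neg at hcon
    have h1 : Real.sin (A + B - π) = -Real.sin (A + B) := by
      rw [Real.sin_sub]
      simp
    have h2 : 0 ≤ Real.sin (A + B - π) :=
      Real.sin_nonneg_of_nonneg_of_le_pi (by linarith) (by linarith)
    rw [h1, hsinAB] at h2
    have : 0 < Real.sqrt (legPoly a b c) / (2*(a*b)) := by positivity
    linarith
  have harc : Real.arccos (Real.cos (A + B)) = A + B :=
    Real.arccos_cos hABpos.le hABlt.le
  rw [hcosAB, Real.arccos_neg] at harc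
  have : Real.arccos ((a^2+b^2-c^2)/(2*(a*b))) = C := by
    show _ = planarAngle c a b
    rw [planarAngle]
    ring_nf
  rw [this] at harc
  linarith

/-- **Legendre's theorem, qualitative form.**  Fix side lengths `a, b, c` satisfying the
triangle inequality.  As `R → ∞`, each angle of the spherical triangle with sides
`a, b, c` on the sphere of radius `R` minus the corresponding angle of the planar
triangle with the same sides equals one third of the spherical excess `ε(R)` up to a
term which is `o(ε(R))`. -/
theorem legendre_theorem (a b c : ℝ) (ha : 0 < a) (hb : 0 < b) (hc : 0 < c)
    (hab : a < b + c) (hbc : b < a + c) (hca : c < a + b) :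
    (fun R => sphAngle a b c R - planarAngle a b c - sphExcess a b c R / 3)
        =o[atTop] (fun R => sphExcess a b c R) ∧
    (fun R => sphAngle b c a R - planarAngle b c a - sphExcess a b c R / 3)
        =o[atTop] (fun R => sphExcess a b c R) ∧
    (fun R => sphAngle c a b R - planarAngle c a b - sphExcess a b c R / 3)
        =o[atTop] (fun R => sphExcess a b c R) := by
  have hP := legPoly_pos ha hb hc hab hbc hca
  have hPs : 0 < Real.sqrt (legPoly a b c) := Real.sqrt_pos.mpr hP
  set P := Real.sqrt (legPoly a b c) with hPdef
  have hA := keyR a b c ha hb hc hab hbc hca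
  have hB := keyR b c a hb hc ha (by linarith) (by linarith) (by linarith)
  have hC := keyR c a b hc ha hb (by linarith) (by linarith) (by linarith)
  rw [legPoly_cyc a b c] at hB
  rw [legPoly_cyc b c a, legPoly_cyc a b c] at hC
  rw [← hPdef] at hA hB hC
  have hsum := planar_sum a b c ha hb hc hab hbc hca
  have hE : (fun R : ℝ => sphExcess a b c R - P/4 * (R⁻¹)^2) =o[atTop]
      fun R : ℝ => (R⁻¹)^2 := by
    have h := (hA.add hB).add hC
    refine h.congr' (Filter.Eventually.of_forall fun R => ?_)
      (Filter.Eventually.of_forall fun R => rfl)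
    simp only [sphExcess]
    linear_combination -hsum
  have hO : (fun R : ℝ => (R⁻¹)^2) =O[atTop] fun R => sphExcess a b c R := by
    have hev := isLittleO_iff.mp hE (show (0:ℝ) < P/8 by positivity)
    rw [isBigO_iff]
    refine ⟨8/P, ?_⟩
    filter_upwards [hev, eventually_gt_atTop (0:ℝ)] with R h1 hR
    have hx2 : (0:ℝ) < (R⁻¹)^2 := by positivity
    rw [Real.norm_eq_abs, Real.norm_eq_abs, abs_of_pos hx2] at h1
    have h2 := (abs_le.mp h1).1
    have h3 : P/8 * (R⁻¹)^2 ≤ sphExcess a b c R := by linarith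
    have hεpos : 0 < sphExcess a b c R := lt_of_lt_of_le (by positivity) h3
    rw [Real.norm_eq_abs, Real.norm_eq_abs, abs_of_pos hx2, abs_of_pos hεpos]
    calc (R⁻¹)^2 = (8/P) * (P/8 * (R⁻¹)^2) := by field_simp
      _ ≤ (8/P) * sphExcess a b c R := by
          have h8P : (0:ℝ) ≤ 8/P := by positivity
          exact mul_le_mul_of_nonneg_left h3 h8P
  refine ⟨?_, ?_, ?_⟩
  · have h := hA.sub (hE.const_mul_left (1/3))
    refine (h.congr' (Filter.Eventually.of_forall fun R => by ring)
      (Filter.Eventually.of_forall fun R => rfl)).trans_isBigO hO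
  · have h := hB.sub (hE.const_mul_left (1/3))
    refine (h.congr' (Filter.Eventually.of_forall fun R => by ring)
      (Filter.Eventually.of_forall fun R => rfl)).trans_isBigO hO
  · have h := hC.sub (hE.const_mul_left (1/3))
    refine (h.congr' (Filter.Eventually.of_forall fun R => by ring)
      (Filter.Eventually.of_forall fun R => rfl)).trans_isBigO hO
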